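/- arXiv:1707.07366 — 4 statements merged into one kernel-verified Lean document; each statement's English description precedes it below -/
import Mathlib

section
/- Let $O_F$ be a complete discrete valuation ring with uniformizer $\pi$, $M$ a finite free $O_F$-module, and $\Gamma$ a subgroup of $\mathrm{Aut}_{O_F}(M)$. If $M^\Gamma/\pi M^\Gamma = (M/\pi M)^\Gamma$ (i.e., the natural injection is surjective for $k=1$), then for all $k \geq 1$ the natural map $M^\Gamma/\pi^k M^\Gamma \to (M/\pi^k M)^\Gamma$ is an isomorphism. -/
/-!
Injectivity holds because `M` is `π`-torsion free. Surjectivity is proved by induction on `k`: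
if `m ≡ y mod π^k` with `y` fixed and the class of `m` mod `π^(k+1)` is fixed, write
`m - y = π^k • x`; cancelling `π^k` shows that the class of `x` mod `π` is fixed, so the case
`k = 1` gives a fixed `z ≡ x mod π`, and then `y + π^k • z` is fixed and `≡ m mod π^(k+1)`.
-/

section FixedPointsModulo

variable {R M G : Type*} [CommRing R] [AddCommGroup M] [Module R M]
  [FunLike G M M] [LinearMapClass G R M M] {Γ : Set G} {r : R}

theorem fixed_of_smul_fixed (hr : IsSMulRegular M r) {x : M}
    (hx : ∀ γ ∈ Γ, γ (r • x) = r • x) : ∀ γ ∈ Γ, γ x = x := fun γ hγ =>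
  hr <| show r • γ x = r • x by rw [← map_smul, hx γ hγ]

theorem fixed_mod_of_sub_fixed_eq_pow_smul (hr : IsSMulRegular M r) {k : ℕ} {m y x : M}
    (hm : ∀ γ ∈ Γ, ∃ w : M, γ m - m = r ^ (k + 1) • w) (hy : ∀ γ ∈ Γ, γ y = y)
    (hmy : m - y = r ^ k • x) : ∀ γ ∈ Γ, ∃ w : M, γ x - x = r • w := by
  intro γ hγ
  obtain ⟨w, hw⟩ := hm γ hγ
  refine ⟨w, (hr.pow k) ?_⟩
  change r ^ k • (γ x - x) = r ^ k • r • w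
  rw [smul_sub, ← map_smul, ← hmy, map_sub, hy γ hγ, sub_sub_sub_cancel_right, hw,
    pow_succ, mul_smul]

theorem exists_fixed_sub_eq_pow_smul (hr : IsSMulRegular M r)
    (h₁ : ∀ m : M, (∀ γ ∈ Γ, ∃ x : M, γ m - m = r • x) →
      ∃ y : M, (∀ γ ∈ Γ, γ y = y) ∧ ∃ x : M, m - y = r • x) :
    ∀ (k : ℕ) (m : M), (∀ γ ∈ Γ, ∃ x : M, γ m - m = r ^ k • x) →
      ∃ y : M, (∀ γ ∈ Γ, γ y = y) ∧ ∃ x : M, m - y = r ^ k • x := by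
  intro k
  induction k with
  | zero => exact fun m _ => ⟨0, fun γ _ => map_zero γ, m, by simp⟩
  | succ k ih =>
    intro m hm
    have hm_pow : ∀ γ ∈ Γ, ∃ x : M, γ m - m = r ^ k • x := fun γ hγ => by
      obtain ⟨x, hx⟩ := hm γ hγ
      exact ⟨r • x, by rw [hx, pow_succ, mul_smul]⟩
    obtain ⟨y, hy, x, hmy⟩ := ih m hm_pow
    obtain ⟨z, hz, w, hxz⟩ := h₁ x (fixed_mod_of_sub_fixed_eq_pow_smul hr hm hy hmy)
    refine ⟨y + r ^ k • z, fun γ hγ => ?_, w, ?_⟩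
    · rw [map_add, map_smul, hy γ hγ, hz γ hγ]
    · rw [sub_add_eq_sub_sub, hmy, ← smul_sub, hxz, pow_succ, mul_smul]

end FixedPointsModulo

theorem stmt_2_general (O M : Type) [CommRing O] [IsDomain O]
    (π : O) (hπ : Irreducible π)
    [AddCommGroup M] [Module O M] [Module.Free O M]
    (Γ : Subgroup (M ≃ₗ[O] M))
    (hsurj1 : ∀ m : M, (∀ γ ∈ Γ, ∃ x : M, γ m - m = π • x) →
      ∃ y : M, (∀ γ ∈ Γ, γ y = y) ∧ ∃ x : M, m - y = π • x)
    (k : ℕ) :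
    (∀ m : M, (∀ γ ∈ Γ, γ m = m) → (∃ x : M, m = π ^ k • x) →
        ∃ y : M, (∀ γ ∈ Γ, γ y = y) ∧ m = π ^ k • y) ∧
    (∀ m : M, (∀ γ ∈ Γ, ∃ x : M, γ m - m = π ^ k • x) →
        ∃ y : M, (∀ γ ∈ Γ, γ y = y) ∧ ∃ x : M, m - y = π ^ k • x) := by
  have hπ_reg : IsSMulRegular M π := .of_ne_zero hπ.ne_zero
  refine ⟨?_, exists_fixed_sub_eq_pow_smul hπ_reg hsurj1 k⟩
  rintro m hm ⟨x, rfl⟩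
  exact ⟨x, fixed_of_smul_fixed (hπ_reg.pow k) hm, rfl⟩

/-- Let `O` be a complete discrete valuation ring with uniformizer `π`, `M` a
finite free `O`-module and `Γ ≤ Aut_O(M)`.  If the natural injection
`M^Γ/π M^Γ → (M/π M)^Γ` is surjective (the case `k = 1`), then for all `k ≥ 1` the natural
map `M^Γ/π^k M^Γ → (M/π^k M)^Γ` is an isomorphism, i.e. both injective and surjective.
Injectivity: a `Γ`-fixed element divisible by `π^k` is `π^k` times a fixed element.
Surjectivity: any `m` whose class mod `π^k` is `Γ`-fixed is congruent mod `π^k` to a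
`Γ`-fixed element. -/
theorem stmt_2 (O M : Type) [CommRing O] [IsDomain O] [IsDiscreteValuationRing O]
    (π : O) (hπ : Irreducible π) [IsAdicComplete (Ideal.span {π}) O]
    [AddCommGroup M] [Module O M] [Module.Free O M] [Module.Finite O M]
    (Γ : Subgroup (M ≃ₗ[O] M))
    (hsurj1 : ∀ m : M, (∀ γ ∈ Γ, ∃ x : M, γ m - m = π • x) →
      ∃ y : M, (∀ γ ∈ Γ, γ y = y) ∧ ∃ x : M, m - y = π • x)
    (k : ℕ) (hk : 1 ≤ k) :
    (∀ m : M, (∀ γ ∈ Γ, γ m = m) → (∃ x : M, m = π ^ k • x) →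
        ∃ y : M, (∀ γ ∈ Γ, γ y = y) ∧ m = π ^ k • y) ∧
    (∀ m : M, (∀ γ ∈ Γ, ∃ x : M, γ m - m = π ^ k • x) →
        ∃ y : M, (∀ γ ∈ Γ, γ y = y) ∧ ∃ x : M, m - y = π ^ k • x) :=
  stmt_2_general O M π hπ Γ hsurj1 k
end

section
/- Let $F$ be a perfect field, $V$ a finite-dimensional $F$-vector space, and $H \subseteq G \subseteq \mathrm{GL}(V)$ subgroups. If $V$ is semisimple as an $H$-representation and $\dim_F \mathrm{End}_G(V) \geq \dim_F \mathrm{End}_H(V)$, then $V$ is semisimple as a $G$-representation. -/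
open Module

/-- A set `S` of linear automorphisms acts semisimply on `V` if every `S`-stable subspace
has an `S`-stable complement. -/
def ActsSemisimply {F V : Type} [Field F] [AddCommGroup V] [Module F V]
    (S : Set (V ≃ₗ[F] V)) : Prop :=
  ∀ U : Submodule F V, (∀ g ∈ S, ∀ x ∈ U, g x ∈ U) →
    ∃ U' : Submodule F V, (∀ g ∈ S, ∀ x ∈ U', g x ∈ U') ∧ IsCompl U U'

/-- The commutant (centralizer) of a set of automorphisms inside `End_F(V)`. -/
noncomputable def commutantDim {F V : Type} [Field F] [AddCommGroup V] [Module F V]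
    (S : Set (V ≃ₗ[F] V)) : ℕ :=
  Module.finrank F
    (Subalgebra.centralizer F ((fun g : V ≃ₗ[F] V => (g : Module.End F V)) '' S) :
      Subalgebra F (Module.End F V))

/-!
A stable subspace `U` of `V` has a stable complement `U'` exactly when some projection onto `U`
commutes with the group. Semisimplicity under `H` supplies an `H`-stable complement, whose
projection lies in `End_H(V)`. Since `End_G(V) ⊆ End_H(V)`, the dimension hypothesis forces
`End_G(V) = End_H(V)`, so this projection also commutes with `G` and its kernel `U'` is `G`-stable.
-/

section Commutant

variable {F V : Type} [Field F] [AddCommGroup V] [Module F V]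

abbrev commutant (S : Set (V ≃ₗ[F] V)) : Subalgebra F (End F V) :=
  Subalgebra.centralizer F ((fun g : V ≃ₗ[F] V => (g : End F V)) '' S)

theorem mem_commutant {S : Set (V ≃ₗ[F] V)} {f : End F V} :
    f ∈ commutant S ↔ ∀ g ∈ S, Commute f (g : End F V) := by
  simp only [Subalgebra.mem_centralizer_iff, Set.forall_mem_image]
  exact forall₂_congr fun _ _ => eq_comm

theorem commutant_anti {S T : Set (V ≃ₗ[F] V)} (hST : S ⊆ T) : commutant T ≤ commutant S :=
  Subalgebra.centralizer_le F _ _ (Set.image_mono hST)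

theorem commutant_eq_of_subset_of_commutantDim_le [FiniteDimensional F V]
    {S T : Set (V ≃ₗ[F] V)} (hST : S ⊆ T) (hdim : commutantDim S ≤ commutantDim T) :
    commutant T = commutant S :=
  Subalgebra.toSubmodule_injective <| Submodule.eq_of_le_of_finrank_le (commutant_anti hST) hdim

theorem Submodule.commute_projection_iff {U U' : Submodule F V} (hUU' : IsCompl U U')
    (T : End F V) :
    Commute (U.projection U' hUU') T ↔
      U ∈ End.invtSubmodule T ∧ U' ∈ End.invtSubmodule T := by
  simpa using LinearMap.IsIdempotentElem.commute_iff (T := T) (isIdempotentElem_projection hUU')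

theorem ActsSemisimply.of_subset_of_commutant_eq {H G : Set (V ≃ₗ[F] V)}
    (hHG : H ⊆ G) (hH : ActsSemisimply H) (hcomm : commutant G = commutant H) :
    ActsSemisimply G := by
  intro U hU
  obtain ⟨U', hU', hUU'⟩ := hH U fun h hh => hU h (hHG hh)
  have hπH : U.projection U' hUU' ∈ commutant H := mem_commutant.2 fun h hh =>
    (Submodule.commute_projection_iff hUU' _).2 ⟨hU h (hHG hh), hU' h hh⟩
  rw [← hcomm] at hπH
  exact ⟨U', fun g hg => ((Submodule.commute_projection_iff hUU' _).1
    (mem_commutant.1 hπH g hg)).2, hUU'⟩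

end Commutant

theorem stmt_5_general (F V : Type) [Field F]
    [AddCommGroup V] [Module F V] [FiniteDimensional F V]
    (H G : Subgroup (V ≃ₗ[F] V)) (hHG : H ≤ G)
    (hssH : ActsSemisimply (H : Set (V ≃ₗ[F] V)))
    (hdim : commutantDim (G : Set (V ≃ₗ[F] V)) ≥ commutantDim (H : Set (V ≃ₗ[F] V))) :
    ActsSemisimply (G : Set (V ≃ₗ[F] V)) :=
  hssH.of_subset_of_commutant_eq hHG (commutant_eq_of_subset_of_commutantDim_le hHG hdim)

/-- `F` a perfect field, `V` a finite-dimensional `F`-vector space,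
`H ⊆ G ⊆ GL(V)` subgroups.  If `V` is semisimple as an `H`-representation and
`dim_F End_G(V) ≥ dim_F End_H(V)`, then `V` is semisimple as a `G`-representation. -/
theorem stmt_5 (F V : Type) [Field F] [PerfectField F]
    [AddCommGroup V] [Module F V] [FiniteDimensional F V]
    (H G : Subgroup (V ≃ₗ[F] V)) (hHG : H ≤ G)
    (hssH : ActsSemisimply (H : Set (V ≃ₗ[F] V)))
    (hdim : commutantDim (G : Set (V ≃ₗ[F] V)) ≥ commutantDim (H : Set (V ≃ₗ[F] V))) :
    ActsSemisimply (G : Set (V ≃ₗ[F] V)) :=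
  stmt_5_general F V H G hHG hssH hdim
end

section
/- Let $F$ be a field, $G$ a finite group, $H$ a normal subgroup of $G$ such that the index $[G:H]$ is invertible in $F$, and $V$ a finite-dimensional $F$-representation of $G$. Then $V$ is semisimple as a $G$-representation if and only if its restriction to $H$ is semisimple. -/
/-!
Semisimplicity with respect to `S` says that the modular lattice of `S`-stable subspaces is
complemented. As `V` is finite-dimensional this lattice is compactly generated, so this holds
exactly when its atoms, the `S`-irreducible subspaces, span `V`.

If `V` is `G`-semisimple, it is spanned by `G`-irreducible subspaces `M`. For an
`H`-irreducible `W ≤ M`, the span of the translates `ρ g W` is `G`-stable, hence equal to `M`,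
and each translate is again `H`-irreducible because `H` is normal (Clifford).
So the `H`-irreducible subspaces span `V`.

Conversely, an `H`-stable complement of a `G`-stable `U` gives a projection `π` onto `U` commuting
with `H`. The conjugate `ρ a * π * ρ a⁻¹` only depends on the coset `a H`, and summing it over
`G ⧸ H` and dividing by `[G:H]` gives a `G`-equivariant projection onto `U`, whose kernel is a
`G`-stable complement.
-/

/-- A representation `ρ` of a group `G` on `V` is semisimple when restricted to a subset
`S ⊆ G` if every subspace stable under all of `S` admits an `S`-stable complement. -/
def RestrictedSemisimple {F G V : Type} [Field F] [Group G] [AddCommGroup V] [Module F V]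
    (ρ : Representation F G V) (S : Set G) : Prop :=
  ∀ U : Submodule F V, (∀ g ∈ S, ∀ x ∈ U, ρ g x ∈ U) →
    ∃ U' : Submodule F V, (∀ g ∈ S, ∀ x ∈ U', ρ g x ∈ U') ∧ IsCompl U U'

theorem LinearMap.IsProj.inv_card_smul_sum {F V ι : Type*} [Field F] [AddCommGroup V]
    [Module F V] {U : Submodule F V} (s : Finset ι) {f : ι → Module.End F V}
    (hf : ∀ i ∈ s, IsProj U (f i)) (hs : (s.card : F) ≠ 0) :
    IsProj U ((s.card : F)⁻¹ • ∑ i ∈ s, f i) where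
  map_mem x := by
    rw [LinearMap.smul_apply, LinearMap.sum_apply]
    exact U.smul_mem _ (U.sum_mem fun i hi => (hf i hi).map_mem x)
  map_id x hx := by
    rw [LinearMap.smul_apply, LinearMap.sum_apply,
      Finset.sum_congr rfl fun i hi => (hf i hi).map_id x hx, Finset.sum_const,
      ← Nat.cast_smul_eq_nsmul F, smul_smul, inv_mul_cancel₀ hs, one_smul]

namespace Representation

variable {F G V : Type*} [Field F] [Group G] [AddCommGroup V] [Module F V]
  (ρ : Representation F G V)

def invtSubmoduleOn (S : Set G) : CompleteSublattice (Submodule F V) :=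
  CompleteSublattice.mk' {p | ∀ g ∈ S, p ∈ Module.End.invtSubmodule (ρ g)}
    (fun _ hs g hg => sSup_le fun _ hp => (hs hp g hg).trans (Submodule.comap_mono (le_sSup hp)))
    (fun _ hs g hg _ hx => Submodule.mem_sInf.2 fun p hp =>
      hs hp g hg (Submodule.mem_sInf.1 hx p hp))

variable {ρ} in
theorem invtSubmoduleOn_anti {S T : Set G} (hST : S ⊆ T) :
    (ρ.invtSubmoduleOn T : Set (Submodule F V)) ⊆ ρ.invtSubmoduleOn S :=
  fun _ hp g hg => hp g (hST hg)

instance (S : Set G) : IsModularLattice (ρ.invtSubmoduleOn S) :=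
  ⟨fun y _ h => IsModularLattice.sup_inf_le_assoc_of_le (α := Submodule F V) y.1 h⟩

instance [FiniteDimensional F V] (S : Set G) : IsCompactlyGenerated (ρ.invtSubmoduleOn S) :=
  CompleteLattice.isCompactlyGenerated_of_wellFoundedGT

instance [FiniteDimensional F V] (S : Set G) : IsAtomic (ρ.invtSubmoduleOn S) :=
  isAtomic_of_orderBot_wellFounded_lt wellFounded_lt

section Normal

variable (H : Subgroup G) [H.Normal]

theorem map_mem_invtSubmoduleOn {p : Submodule F V} (hp : p ∈ ρ.invtSubmoduleOn H) (g : G) :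
    p.map (ρ g) ∈ ρ.invtSubmoduleOn H := by
  rintro h hh - ⟨x, hx, rfl⟩
  have hconj : g⁻¹ * h * g ∈ H := by simpa using ‹H.Normal›.conj_mem h hh g⁻¹
  refine ⟨ρ (g⁻¹ * h * g) x, hp _ hconj hx, ?_⟩
  rw [← Module.End.mul_apply, ← map_mul, ← Module.End.mul_apply, ← map_mul]
  group

def conjOrderIso (g : G) : ρ.invtSubmoduleOn H ≃o ρ.invtSubmoduleOn H where
  toFun p := ⟨p.1.map (ρ g), map_mem_invtSubmoduleOn ρ H p.2 g⟩
  invFun p := ⟨p.1.map (ρ g⁻¹), map_mem_invtSubmoduleOn ρ H p.2 g⁻¹⟩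
  left_inv p := Subtype.ext <| by
    simp only [← Submodule.map_comp, ← Module.End.mul_eq_comp, ← map_mul, inv_mul_cancel,
      map_one, Module.End.one_eq_id, Submodule.map_id]
  right_inv p := Subtype.ext <| by
    simp only [← Submodule.map_comp, ← Module.End.mul_eq_comp, ← map_mul, mul_inv_cancel,
      map_one, Module.End.one_eq_id, Submodule.map_id]
  map_rel_iff' := Submodule.map_le_map_iff_of_injective (ρ.apply_bijective g).injective _ _

variable [FiniteDimensional F V]

theorem exists_isAtom_eq_iSup_conj {M : ρ.invtSubmoduleOn Set.univ} (hM : IsAtom M) :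
    ∃ W : ρ.invtSubmoduleOn H, IsAtom W ∧
      (M : Submodule F V) = ⨆ g, (ρ.conjOrderIso H g W : Submodule F V) := by
  let MH : ρ.invtSubmoduleOn H := ⟨M, invtSubmoduleOn_anti (Set.subset_univ _) M.2⟩
  obtain ⟨W, hW, hWM⟩ := (eq_bot_or_exists_atom_le MH).resolve_left
    fun h => hM.1 (Subtype.ext (congrArg Subtype.val h : (M : Submodule F V) = ⊥))
  refine ⟨W, hW, ?_⟩
  have hD : (⨆ g, W.1.map (ρ g)) ∈ ρ.invtSubmoduleOn Set.univ := fun g _ => by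
    rw [Module.End.mem_invtSubmodule_iff_map_le, Submodule.map_iSup]
    refine iSup_le fun g' => ?_
    rw [← Submodule.map_comp, ← Module.End.mul_eq_comp, ← map_mul]
    exact le_iSup (fun g => W.1.map (ρ g)) (g * g')
  have hDM : (⟨_, hD⟩ : ρ.invtSubmoduleOn Set.univ) ≤ M := by
    refine Subtype.mk_le_mk.2 (iSup_le fun g => ?_)
    rintro - ⟨x, hx, rfl⟩
    exact M.2 g (Set.mem_univ g) (hWM hx)
  have hWD : W.1 ≤ ⨆ g, W.1.map (ρ g) := by
    simpa [Module.End.one_eq_id] using le_iSup (fun g => W.1.map (ρ g)) 1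
  rcases hM.le_iff.1 hDM with hD | hD
  · exact absurd (Subtype.ext (le_bot_iff.1 (hWD.trans (congrArg Subtype.val hD).le))) hW.1
  · exact (congrArg Subtype.val hD).symm

theorem complementedLattice_invtSubmoduleOn_normal
    (hG : ComplementedLattice (ρ.invtSubmoduleOn Set.univ)) :
    ComplementedLattice (ρ.invtSubmoduleOn H) := by
  refine complementedLattice_of_sSup_atoms_eq_top (eq_top_iff.2 ?_)
  change (⊤ : Submodule F V) ≤ _
  rw [← CompleteSublattice.coe_top (L := ρ.invtSubmoduleOn Set.univ), ← sSup_atoms_eq_top,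
    CompleteSublattice.coe_sSup', CompleteSublattice.coe_sSup']
  refine iSup₂_le fun M hM => ?_
  obtain ⟨W, hW, hMW⟩ := exists_isAtom_eq_iSup_conj ρ H hM
  rw [hMW]
  exact iSup_le fun g => le_biSup (fun N : ρ.invtSubmoduleOn H => (N : Submodule F V))
    ((ρ.conjOrderIso H g).isAtom_iff W |>.2 hW)

end Normal

section Averaging

variable {U : Submodule F V} {π : Module.End F V}

theorem isProj_conj (hU : U ∈ ρ.invtSubmoduleOn Set.univ) (hπ : LinearMap.IsProj U π) (a : G) :
    LinearMap.IsProj U (ρ a * π * ρ a⁻¹) where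
  map_mem _ := hU a (Set.mem_univ a) (hπ.map_mem _)
  map_id x hx := by
    rw [Module.End.mul_apply, Module.End.mul_apply, hπ.map_id _ (hU _ (Set.mem_univ _) hx),
      self_inv_apply]

theorem conj_eq_of_inv_mul_mem {H : Subgroup G} (hπ : ∀ h ∈ H, Commute π (ρ h)) {a b : G}
    (hab : a⁻¹ * b ∈ H) : ρ b * π * ρ b⁻¹ = ρ a * π * ρ a⁻¹ := by
  obtain ⟨h, hh, rfl⟩ : ∃ h ∈ H, b = a * h := ⟨_, hab, by group⟩
  rw [mul_inv_rev, map_mul, map_mul, mul_assoc (ρ a), ← (hπ h hh).eq, mul_assoc, mul_assoc,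
    ← mul_assoc (ρ h), ← map_mul, mul_inv_cancel, map_one, one_mul, mul_assoc]

theorem exists_isProj_commute_of_index (H : Subgroup G) (hind : (H.index : F) ≠ 0)
    (hU : U ∈ ρ.invtSubmoduleOn Set.univ) (hπ : LinearMap.IsProj U π)
    (hπH : ∀ h ∈ H, Commute π (ρ h)) :
    ∃ P : Module.End F V, LinearMap.IsProj U P ∧ ∀ g, Commute P (ρ g) := by
  have : H.FiniteIndex := ⟨fun h => hind (by rw [h, Nat.cast_zero])⟩
  let := H.fintypeQuotientOfFiniteIndex
  let conj (a : G) : Module.End F V := ρ a * π * ρ a⁻¹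
  have hcard : ((Finset.univ : Finset (G ⧸ H)).card : F) = H.index := by
    rw [Finset.card_univ, Fintype.card_eq_nat_card, H.index_eq_card]
  refine ⟨((Finset.univ : Finset (G ⧸ H)).card : F)⁻¹ • ∑ q : G ⧸ H, conj q.out,
    LinearMap.IsProj.inv_card_smul_sum _ (fun q _ => isProj_conj ρ hU hπ q.out) (hcard ▸ hind),
    fun g => ?_⟩
  have hconj (q : G ⧸ H) : conj (g • q).out * ρ g = ρ g * conj q.out := by
    have hq : ((g * q.out : G) : G ⧸ H) = (g • q).out :=
      (MulAction.Quotient.mk_smul_out H g q).trans (QuotientGroup.out_eq' _).symm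
    simp only [conj]
    rw [conj_eq_of_inv_mul_mem ρ hπH (QuotientGroup.eq.1 hq)]
    simp only [mul_inv_rev, map_mul, mul_assoc, ← map_mul ρ _ g, inv_mul_cancel, map_one,
      mul_one]
  refine Commute.smul_left ?_ _
  calc (∑ q : G ⧸ H, conj q.out) * ρ g = ∑ q : G ⧸ H, conj (g • q).out * ρ g := by
        rw [Finset.sum_mul]
        exact (Fintype.sum_equiv (MulAction.toPerm g) _ _ fun _ => rfl).symm
    _ = ρ g * ∑ q : G ⧸ H, conj q.out := by
        rw [Finset.mul_sum]
        exact Finset.sum_congr rfl fun q _ => hconj q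

theorem complementedLattice_invtSubmoduleOn_univ_of_index (H : Subgroup G)
    (hind : (H.index : F) ≠ 0) (hH : ComplementedLattice (ρ.invtSubmoduleOn H)) :
    ComplementedLattice (ρ.invtSubmoduleOn Set.univ) := by
  rw [CompleteSublattice.isComplemented_iff] at hH ⊢
  intro U hU
  obtain ⟨U', hU', hC⟩ := hH U (invtSubmoduleOn_anti (Set.subset_univ _) hU)
  have hπ : LinearMap.IsProj U (U.projection U' hC) :=
    ⟨Submodule.projection_apply_mem hC, fun _ => Submodule.projection_apply_of_mem_left hC⟩
  have hπH (h : G) (hh : h ∈ H) : Commute (U.projection U' hC) (ρ h) := by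
    rw [LinearMap.IsIdempotentElem.commute_iff (Submodule.isIdempotentElem_projection hC),
      Submodule.range_projection, Submodule.ker_projection]
    exact ⟨hU h (Set.mem_univ h), hU' h hh⟩
  obtain ⟨P, hP, hPG⟩ := exists_isProj_commute_of_index ρ H hind hU hπ hπH
  refine ⟨LinearMap.ker P, fun g _ => ?_, hP.isCompl⟩
  exact ((LinearMap.IsIdempotentElem.commute_iff hP.isIdempotentElem).1 (hPG g)).2

end Averaging

end Representation

theorem restrictedSemisimple_iff_complementedLattice {F G V : Type} [Field F] [Group G]
    [AddCommGroup V] [Module F V] (ρ : Representation F G V) (S : Set G) :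
    RestrictedSemisimple ρ S ↔ ComplementedLattice (ρ.invtSubmoduleOn S) := by
  rw [CompleteSublattice.isComplemented_iff]
  rfl

theorem stmt_6_general (F G V : Type) [Field F] [Group G]
    [AddCommGroup V] [Module F V] [FiniteDimensional F V]
    (H : Subgroup G) [H.Normal] (hind : (H.index : F) ≠ 0)
    (ρ : Representation F G V) :
    RestrictedSemisimple ρ (Set.univ : Set G) ↔ RestrictedSemisimple ρ (H : Set G) := by
  rw [restrictedSemisimple_iff_complementedLattice, restrictedSemisimple_iff_complementedLattice]
  exact ⟨ρ.complementedLattice_invtSubmoduleOn_normal H,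
    ρ.complementedLattice_invtSubmoduleOn_univ_of_index H hind⟩

/-- Clifford-type lemma: `F` a field, `G` a finite group, `H ⊴ G` a normal
subgroup with index `[G:H]` invertible in `F`, `V` a finite-dimensional `F`-representation
of `G`.  Then `V` is semisimple as a `G`-representation iff its restriction to `H` is
semisimple. -/
theorem stmt_6 (F G V : Type) [Field F] [Group G] [Finite G]
    [AddCommGroup V] [Module F V] [FiniteDimensional F V]
    (H : Subgroup G) [H.Normal] (hind : (H.index : F) ≠ 0)
    (ρ : Representation F G V) :
    RestrictedSemisimple ρ (Set.univ : Set G) ↔ RestrictedSemisimple ρ (H : Set G) :=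
  stmt_6_general F G V H hind ρ
end

section
/- Let $\Gamma$ be a compact subgroup of $\mathrm{GL}_n(\mathbb{Q}_\ell)$ and $\Delta$ a closed normal subgroup. Then both the total $\ell$-rank and the $\ell$-dimension are additive: $\mathrm{rk}_\ell \Gamma = \mathrm{rk}_\ell \Delta + \mathrm{rk}_\ell(\Gamma/\Delta)$ and $\dim_\ell \Gamma = \dim_\ell \Delta + \dim_\ell(\Gamma/\Delta)$. -/
/-!
Choose one open normal subgroup `N` of the profinite group `Γ` that is small enough for all three
data at once: `N ≤ U`, `N ∩ Δ ≤ V` and `NΔ/Δ ≤ W`. Shrinking an open normal prosolvable subgroup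
to `N` only adds a solvable normal subgroup to the finite quotient, so it does not change `D`.
At level `N` the extension `Δ/(N ∩ Δ) → Γ/N → Γ/NΔ` of finite groups gives additivity.
-/

/-- A topological group is prosolvable if all of its (finite, for a profinite group)
quotients by open normal subgroups are solvable. -/
def ProSolvable (G : Type) [Group G] [TopologicalSpace G] : Prop :=
  ∀ (N : Subgroup G) [N.Normal], IsOpen (N : Set G) → IsSolvable (G ⧸ N)

open QuotientGroup

instance Matrix.totallyDisconnectedSpace {m n R : Type*} [TopologicalSpace R]
    [TotallyDisconnectedSpace R] : TotallyDisconnectedSpace (Matrix m n R) :=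
  Pi.totallyDisconnectedSpace

instance Units.totallyDisconnectedSpace {M : Type*} [TopologicalSpace M] [Monoid M]
    [TotallyDisconnectedSpace M] : TotallyDisconnectedSpace Mˣ :=
  have : TotallyDisconnectedSpace Mᵐᵒᵖ := MulOpposite.opHomeomorph.totallyDisconnectedSpace
  Units.isEmbedding_embedProduct.isTotallyDisconnected_range.mp
    (isTotallyDisconnected_of_totallyDisconnectedSpace _)

namespace QuotientGroup

variable {G : Type*} [Group G]

noncomputable def quotientSubgroupOfEquivMap (N M : Subgroup G) [N.Normal] :
    M ⧸ N.subgroupOf M ≃* M.map (mk' N) :=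
  have hker : ((mk' N).comp M.subtype).ker = N.subgroupOf M := by
    rw [← MonoidHom.comap_ker, ker_mk']; rfl
  have hrange : ((mk' N).comp M.subtype).range = M.map (mk' N) := by
    rw [MonoidHom.range_comp, Subgroup.range_subtype]
  (quotientMulEquivOfEq hker.symm).trans
    ((quotientKerEquivRange _).trans (MulEquiv.subgroupCongr hrange))

noncomputable def quotientMapEquivQuotientSup (N M : Subgroup G) [N.Normal] [M.Normal] :
    (G ⧸ N) ⧸ M.map (mk' N) ≃* G ⧸ (M ⊔ N) :=
  have hmap : M.map (mk' N) = (M ⊔ N).map (mk' N) := by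
    rw [Subgroup.map_sup, map_mk'_self, sup_bot_eq]
  (quotientMulEquivOfEq hmap).trans (quotientQuotientEquivQuotient N (M ⊔ N) le_sup_right)

end QuotientGroup

theorem exists_openNormalSubgroup_le_and_subgroupOf_le_and_map_le {G : Type*} [Group G]
    [TopologicalSpace G] [IsTopologicalGroup G] [CompactSpace G] [TotallyDisconnectedSpace G]
    (Δ : Subgroup G) [Δ.Normal] {U : Subgroup G} (hU : IsOpen (U : Set G))
    {V : Subgroup Δ} (hV : IsOpen (V : Set Δ))
    {W : Subgroup (G ⧸ Δ)} (hW : IsOpen (W : Set (G ⧸ Δ))) :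
    ∃ N : OpenNormalSubgroup G,
      N.toSubgroup ≤ U ∧ N.toSubgroup.subgroupOf Δ ≤ V ∧ N.toSubgroup.map (mk' Δ) ≤ W := by
  obtain ⟨S, hS, hSV⟩ := isOpen_induced_iff.mp hV
  have h1S : ((1 : Δ) : G) ∈ S := by
    rw [← Set.mem_preimage, hSV]
    exact V.one_mem
  obtain ⟨N, hN⟩ := ProfiniteGrp.exist_openNormalSubgroup_sub_open_nhds_of_one
    ((hU.inter (hW.preimage continuous_mk)).inter hS) ⟨⟨U.one_mem, W.one_mem⟩, h1S⟩
  refine ⟨N, fun x hx => (hN hx).1.1, fun x hx => ?_, ?_⟩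
  · rw [← SetLike.mem_coe, ← hSV]
    exact (hN hx).2
  · rintro _ ⟨x, hx, rfl⟩
    exact (hN hx).1.2

/-- The axioms shared by `rk_ℓ` and `dim_ℓ` on finite groups; by Jordan–Hölder they determine
such a `D` from its values on the nonabelian finite simple groups. -/
structure IsJordanHolderInvariant (D : (H : Type) → [Group H] → ℕ) : Prop where
  eq_of_mulEquiv : ∀ {H K : Type} [Group H] [Group K], (H ≃* K) → D H = D K
  eq_add_quotient : ∀ (H : Type) [Group H] [Finite H] (N : Subgroup H) [N.Normal],
    D H = D N + D (H ⧸ N)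
  eq_zero_of_isSolvable : ∀ (H : Type) [Group H] [Finite H], Group.IsSolvable H → D H = 0

namespace IsJordanHolderInvariant

variable {D : (H : Type) → [Group H] → ℕ} (hD : IsJordanHolderInvariant D)
  {G : Type} [Group G]
include hD

theorem quotient_eq_of_le {N M : Subgroup G} [N.Normal] [M.Normal] [Finite (G ⧸ N)]
    (hNM : N ≤ M) (hsol : Group.IsSolvable (M ⧸ N.subgroupOf M)) : D (G ⧸ N) = D (G ⧸ M) := by
  have : Group.IsSolvable (M.map (mk' N)) :=
    Group.isSolvable_of_surjective (f := (quotientSubgroupOfEquivMap N M).toMonoidHom)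
      (quotientSubgroupOfEquivMap N M).surjective
  rw [hD.eq_add_quotient _ (M.map (mk' N)), hD.eq_zero_of_isSolvable _ this, zero_add]
  exact hD.eq_of_mulEquiv (quotientQuotientEquivQuotient N M hNM)

theorem quotient_eq_of_proSolvable [TopologicalSpace G] {N M : Subgroup G} [N.Normal] [M.Normal]
    [Finite (G ⧸ N)] (hNM : N ≤ M) (hN : IsOpen (N : Set G)) (hM : ProSolvable M) :
    D (G ⧸ N) = D (G ⧸ M) :=
  hD.quotient_eq_of_le hNM (hM _ (hN.preimage continuous_subtype_val))

theorem quotient_eq_add (N Δ : Subgroup G) [N.Normal] [Δ.Normal] [Finite (G ⧸ N)] :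
    D (G ⧸ N) = D (Δ ⧸ N.subgroupOf Δ) + D ((G ⧸ Δ) ⧸ N.map (mk' Δ)) := by
  rw [hD.eq_add_quotient _ (Δ.map (mk' N)),
    hD.eq_of_mulEquiv (quotientSubgroupOfEquivMap N Δ).symm]
  congr 1
  exact hD.eq_of_mulEquiv ((quotientMapEquivQuotientSup N Δ).trans
    ((quotientMulEquivOfEq (sup_comm Δ N)).trans (quotientMapEquivQuotientSup Δ N).symm))

theorem quotient_eq_add_of_proSolvable [TopologicalSpace G] [IsTopologicalGroup G]
    [CompactSpace G] [TotallyDisconnectedSpace G] (Δ : Subgroup G) [Δ.Normal]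
    {U : Subgroup G} [U.Normal] (hU : IsOpen (U : Set G)) (hUsolv : ProSolvable U)
    {V : Subgroup Δ} [V.Normal] (hV : IsOpen (V : Set Δ)) (hVsolv : ProSolvable V)
    {W : Subgroup (G ⧸ Δ)} [W.Normal] (hW : IsOpen (W : Set (G ⧸ Δ))) (hWsolv : ProSolvable W) :
    D (G ⧸ U) = D (Δ ⧸ V) + D ((G ⧸ Δ) ⧸ W) := by
  obtain ⟨N, hNU, hNV, hNW⟩ :=
    exists_openNormalSubgroup_le_and_subgroupOf_le_and_map_le Δ hU hV hW
  have : N.toSubgroup.FiniteIndex := N.finiteIndex_of_finite_quotient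
  have : (N.toSubgroup ⊔ Δ).FiniteIndex := Subgroup.finiteIndex_of_le le_sup_left
  have : Finite ((G ⧸ Δ) ⧸ N.toSubgroup.map (mk' Δ)) :=
    Finite.of_equiv _ (quotientMapEquivQuotientSup Δ N.toSubgroup).symm.toEquiv
  calc D (G ⧸ U) = D (G ⧸ N.toSubgroup) :=
        (hD.quotient_eq_of_proSolvable hNU N.isOpen hUsolv).symm
    _ = D (Δ ⧸ N.toSubgroup.subgroupOf Δ) + D ((G ⧸ Δ) ⧸ N.toSubgroup.map (mk' Δ)) :=
        hD.quotient_eq_add N.toSubgroup Δ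
    _ = D (Δ ⧸ V) + D ((G ⧸ Δ) ⧸ W) := by
      rw [hD.quotient_eq_of_proSolvable hNV (N.isOpen.preimage continuous_subtype_val) hVsolv,
        hD.quotient_eq_of_proSolvable hNW (isOpenMap_coe _ N.isOpen) hWsolv]

end IsJordanHolderInvariant

theorem stmt_19_general
    (D : (H : Type) → [inst : Group H] → ℕ)
    (hiso : ∀ (H K : Type) [Group H] [Group K], (H ≃* K) → D H = D K)
    (hadd : ∀ (H : Type) [Group H] [Finite H] (N : Subgroup H) [N.Normal],
      D H = D N + D (H ⧸ N))
    (hsolv : ∀ (H : Type) [Group H] [Finite H], IsSolvable H → D H = 0)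
    (ℓ n : ℕ) [Fact ℓ.Prime]
    (Γ : Subgroup (GL (Fin n) ℚ_[ℓ]))
    (hΓ : IsCompact ((Γ : Set (GL (Fin n) ℚ_[ℓ]))))
    (Δ : Subgroup ↥Γ) [Δ.Normal]
    (U : Subgroup ↥Γ) (hUopen : IsOpen ((U : Set ↥Γ))) (hUnorm : U.Normal)
    (hUsolv : ProSolvable ↥U)
    (V : Subgroup ↥Δ) (hVopen : IsOpen ((V : Set ↥Δ))) (hVnorm : V.Normal)
    (hVsolv : ProSolvable ↥V)
    (W : Subgroup (↥Γ ⧸ Δ)) (hWopen : IsOpen ((W : Set (↥Γ ⧸ Δ)))) (hWnorm : W.Normal)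
    (hWsolv : ProSolvable ↥W) :
    D (↥Γ ⧸ U) = D (↥Δ ⧸ V) + D ((↥Γ ⧸ Δ) ⧸ W) := by
  have hD : IsJordanHolderInvariant D := ⟨hiso _ _, hadd, hsolv⟩
  have : CompactSpace Γ := isCompact_iff_compactSpace.mp hΓ
  exact hD.quotient_eq_add_of_proSolvable Δ hUopen hUsolv hVopen hVsolv hWopen hWsolv

/-- additivity of the total `ℓ`-rank and the `ℓ`-dimension on compact
subgroups of `GL_n(ℚ_ℓ)`.  Both `rk_ℓ` and `dim_ℓ` are instances of an invariant `D` of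
groups which is (a) isomorphism-invariant, (b) additive on extensions of finite groups,
and (c) zero on finite solvable groups — by the Jordan–Hölder theorem these properties
pin down `D` on finite groups in terms of its values on nonabelian finite simple groups
(`f·dim G` resp. `f·rk G` for groups of Lie type in characteristic `ℓ`, `0` otherwise),
and `D` extends to a compact group `Γ` as `D(Γ/U)` for any open normal prosolvable `U ≤ Γ`.
The statement: for `Γ ≤ GL_n(ℚ_ℓ)` compact, `Δ ⊴ Γ` closed normal, and any choices of
open normal prosolvable subgroups `U ≤ Γ`, `V ≤ Δ`, `W ≤ Γ/Δ`, one has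
`D(Γ/U) = D(Δ/V) + D((Γ/Δ)/W)`, i.e. `rk_ℓ Γ = rk_ℓ Δ + rk_ℓ (Γ/Δ)` and
`dim_ℓ Γ = dim_ℓ Δ + dim_ℓ (Γ/Δ)`. -/
theorem stmt_19
    (D : (H : Type) → [inst : Group H] → ℕ)
    (hiso : ∀ (H K : Type) [Group H] [Group K], (H ≃* K) → D H = D K)
    (hadd : ∀ (H : Type) [Group H] [Finite H] (N : Subgroup H) [N.Normal],
      D H = D N + D (H ⧸ N))
    (hsolv : ∀ (H : Type) [Group H] [Finite H], IsSolvable H → D H = 0)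
    (ℓ n : ℕ) [Fact ℓ.Prime]
    (Γ : Subgroup (GL (Fin n) ℚ_[ℓ]))
    (hΓ : IsCompact ((Γ : Set (GL (Fin n) ℚ_[ℓ]))))
    (Δ : Subgroup ↥Γ) [Δ.Normal] (hΔ : IsClosed ((Δ : Set ↥Γ)))
    (U : Subgroup ↥Γ) (hUopen : IsOpen ((U : Set ↥Γ))) (hUnorm : U.Normal)
    (hUsolv : ProSolvable ↥U)
    (V : Subgroup ↥Δ) (hVopen : IsOpen ((V : Set ↥Δ))) (hVnorm : V.Normal)
    (hVsolv : ProSolvable ↥V)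
    (W : Subgroup (↥Γ ⧸ Δ)) (hWopen : IsOpen ((W : Set (↥Γ ⧸ Δ)))) (hWnorm : W.Normal)
    (hWsolv : ProSolvable ↥W) :
    D (↥Γ ⧸ U) = D (↥Δ ⧸ V) + D ((↥Γ ⧸ Δ) ⧸ W) :=
  stmt_19_general D hiso hadd hsolv ℓ n Γ hΓ Δ U hUopen hUnorm hUsolv V hVopen hVnorm hVsolv W
    hWopen hWnorm hWsolv
end
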